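/- arXiv:2003.05715 — 5 statements merged into one kernel-verified Lean document; each statement's English description precedes it below -/
import Mathlib

section
/- Let C : ℝ → ℝ be strictly convex and monotone increasing, and let μ₁, μ₂ ∈ ℝ with μ₁ ≠ μ₂. Then the function (x₁, x₂) ↦ C(x₁ + x₂) - μ₁ x₁ - μ₂ x₂ has a unique minimizer over the compact box [-P₁, P₁] × [-P₂, P₂] (for any P₁, P₂ > 0). -/
open Set

/-!
The objective is `g ∘ L - ℓ` with `g = C` strictly convex, `L z = z₁ + z₂` and
`ℓ z = μ₁ z₁ + μ₂ z₂`. A minimizer exists by compactness. For two minimizers `x` and `y`, the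
midpoint would be strictly better if `L x ≠ L y`, so `L x = L y`; equality of the values then
forces `ℓ x = ℓ y`, and since `μ₁ ≠ μ₂` the pair `(L, ℓ)` is injective.
-/

theorem StrictConvexOn.eq_of_isMinOn_comp_sub {E : Type*} [AddCommGroup E] [Module ℝ E]
    {s : Set E} {t : Set ℝ} {g : ℝ → ℝ} (hg : StrictConvexOn ℝ t g) (hs : Convex ℝ s)
    {L ℓ : E →ₗ[ℝ] ℝ} (hst : MapsTo L s t)
    (hinj : ∀ x ∈ s, ∀ y ∈ s, L x = L y → ℓ x = ℓ y → x = y) {x y : E}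
    (hxmin : IsMinOn (fun z ↦ g (L z) - ℓ z) s x) (hymin : IsMinOn (fun z ↦ g (L z) - ℓ z) s y)
    (hx : x ∈ s) (hy : y ∈ s) : x = y := by
  have hval : g (L x) - ℓ x = g (L y) - ℓ y := le_antisymm (hxmin hy) (hymin hx)
  have hL : L x = L y := by
    by_contra hne
    have hm : (2⁻¹ : ℝ) • x + (2⁻¹ : ℝ) • y ∈ s :=
      hs hx hy (by norm_num) (by norm_num) (by norm_num)
    have hmid : g (2⁻¹ * L x + 2⁻¹ * L y) < 2⁻¹ * g (L x) + 2⁻¹ * g (L y) :=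
      hg.2 (hst hx) (hst hy) hne (by norm_num) (by norm_num) (by norm_num)
    have hxm := isMinOn_iff.mp hxmin _ hm
    simp only [map_add, map_smul, smul_eq_mul] at hxm
    linarith
  exact hinj x hx y hy hL (by rw [hL] at hval; linarith)

theorem Prod.ext_of_add_eq_of_mul_add_mul_eq {μ₁ μ₂ : ℝ} (hμ : μ₁ ≠ μ₂) {x y : ℝ × ℝ}
    (hsum : x.1 + x.2 = y.1 + y.2) (hlin : μ₁ * x.1 + μ₂ * x.2 = μ₁ * y.1 + μ₂ * y.2) :
    x = y := by
  have h : (μ₁ - μ₂) * (x.1 - y.1) = 0 := by linear_combination hlin - μ₂ * hsum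
  have h₁ : x.1 = y.1 := by simpa [sub_eq_zero, hμ] using h
  exact Prod.ext h₁ (by linarith)

theorem stmt_0_general (C : ℝ → ℝ) (hC : StrictConvexOn ℝ Set.univ C)
    (P₁ P₂ μ₁ μ₂ : ℝ) (hP₁ : 0 < P₁) (hP₂ : 0 < P₂) (hμ : μ₁ ≠ μ₂) :
    ∃! z : ℝ × ℝ, z ∈ (Set.Icc (-P₁) P₁ ×ˢ Set.Icc (-P₂) P₂) ∧
      ∀ y ∈ (Set.Icc (-P₁) P₁ ×ˢ Set.Icc (-P₂) P₂),
        C (z.1 + z.2) - μ₁ * z.1 - μ₂ * z.2 ≤ C (y.1 + y.2) - μ₁ * y.1 - μ₂ * y.2 := by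
  set S := Icc (-P₁) P₁ ×ˢ Icc (-P₂) P₂
  let L : ℝ × ℝ →ₗ[ℝ] ℝ := LinearMap.fst ℝ ℝ ℝ + LinearMap.snd ℝ ℝ ℝ
  let ℓ : ℝ × ℝ →ₗ[ℝ] ℝ := μ₁ • LinearMap.fst ℝ ℝ ℝ + μ₂ • LinearMap.snd ℝ ℝ ℝ
  have hF : (fun z : ℝ × ℝ ↦ C (z.1 + z.2) - μ₁ * z.1 - μ₂ * z.2) = fun z ↦ C (L z) - ℓ z := by
    funext z
    simp only [L, ℓ, LinearMap.add_apply, LinearMap.smul_apply, LinearMap.fst_apply,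
      LinearMap.snd_apply, smul_eq_mul]
    ring
  have hCcont : Continuous C := continuousOn_univ.mp (hC.convexOn.continuousOn isOpen_univ)
  have hS₀ : ((0, 0) : ℝ × ℝ) ∈ S := ⟨⟨by linarith, hP₁.le⟩, ⟨by linarith, hP₂.le⟩⟩
  obtain ⟨z, hzS, hzmin⟩ := (isCompact_Icc.prod isCompact_Icc).exists_isMinOn ⟨_, hS₀⟩
    (f := fun z : ℝ × ℝ ↦ C (z.1 + z.2) - μ₁ * z.1 - μ₂ * z.2) (by fun_prop)
  refine ⟨z, ⟨hzS, hzmin⟩, fun y ⟨hyS, hymin⟩ ↦ ?_⟩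
  rw [hF] at hzmin
  replace hymin : IsMinOn (fun z ↦ C (L z) - ℓ z) S y := hF ▸ hymin
  exact hC.eq_of_isMinOn_comp_sub ((convex_Icc _ _).prod (convex_Icc _ _)) (mapsTo_univ _ _)
    (fun x _ y _ ↦ Prod.ext_of_add_eq_of_mul_add_mul_eq hμ) hymin hzmin hyS hzS

/-- If `C` is strictly convex and monotone increasing and `μ₁ ≠ μ₂`, then the function
`(x₁, x₂) ↦ C (x₁ + x₂) - μ₁ x₁ - μ₂ x₂` has a unique minimizer over the box
`[-P₁, P₁] × [-P₂, P₂]`. -/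
theorem stmt_0 (C : ℝ → ℝ) (hC : StrictConvexOn ℝ Set.univ C) (hmono : Monotone C)
    (P₁ P₂ μ₁ μ₂ : ℝ) (hP₁ : 0 < P₁) (hP₂ : 0 < P₂) (hμ : μ₁ ≠ μ₂) :
    ∃! z : ℝ × ℝ, z ∈ (Set.Icc (-P₁) P₁ ×ˢ Set.Icc (-P₂) P₂) ∧
      ∀ y ∈ (Set.Icc (-P₁) P₁ ×ˢ Set.Icc (-P₂) P₂),
        C (z.1 + z.2) - μ₁ * z.1 - μ₂ * z.2 ≤ C (y.1 + y.2) - μ₁ * y.1 - μ₂ * y.2 :=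
  stmt_0_general C hC P₁ P₂ μ₁ μ₂ hP₁ hP₂ hμ
end

section
/- Lagrangian sufficiency for two storage units: Suppose S* = (S₁*, S₂*) ∈ ℝ^{T+1} × ℝ^{T+1} is feasible (satisfies the fixed boundary conditions S*_{j,0} = S̄_{j,0}, S*_{j,T} = S̄_{j,T}, capacity constraints 0 ≤ S*_{j,t} ≤ E_j for 1 ≤ t ≤ T-1, and rate constraints |S*_{j,t} - S*_{j,t-1}| ≤ P_j), and suppose there exist multiplier vectors μ₁*, μ₂* ∈ ℝ^T such that: (ii) for every t, the pair of increments (x_{1,t}(S*), x_{2,t}(S*)) minimizes C_t(x₁ + x₂) - μ*_{1,t} x₁ - μ*_{2,t} x₂ over [-P₁,P₁] × [-P₂,P₂]; and (iii) for j = 1,2 and 1 ≤ t ≤ T-1: μ*_{j,t+1} = μ*_{j,t} if 0 < S*_{j,t} < E_j, μ*_{j,t+1} ≤ μ*_{j,t} if S*_{j,t} = 0, and μ*_{j,t+1} ≥ μ*_{j,t} if S*_{j,t} = E_j. Then S* minimizes ∑_{t=1}^T C_t(x_{1,t}(S) + x_{2,t}(S)) over all feasible strategies S. -/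
open Finset

/-- A two-unit strategy `(S₁, S₂)` is feasible: fixed boundary levels, capacity constraints and
rate constraints. -/
def TwoUnitFeasible (T : ℕ) (E₁ E₂ P₁ P₂ A₁ B₁ A₂ B₂ : ℝ) (S₁ S₂ : ℕ → ℝ) : Prop :=
  S₁ 0 = A₁ ∧ S₁ T = B₁ ∧ S₂ 0 = A₂ ∧ S₂ T = B₂ ∧
  (∀ t, 1 ≤ t → t ≤ T - 1 → 0 ≤ S₁ t ∧ S₁ t ≤ E₁ ∧ 0 ≤ S₂ t ∧ S₂ t ≤ E₂) ∧
  (∀ t, 1 ≤ t → t ≤ T → |S₁ t - S₁ (t - 1)| ≤ P₁ ∧ |S₂ t - S₂ (t - 1)| ≤ P₂)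

/-- The total cost of a two-unit strategy. -/
def TwoUnitCost (T : ℕ) (C : ℕ → ℝ → ℝ) (S₁ S₂ : ℕ → ℝ) : ℝ :=
  ∑ t ∈ Finset.Icc 1 T, C t ((S₁ t - S₁ (t - 1)) + (S₂ t - S₂ (t - 1)))

lemma abel_sum (μ D : ℕ → ℝ) : ∀ n, 1 ≤ n →
    ∑ t ∈ Icc 1 n, μ t * (D t - D (t - 1)) =
      μ n * D n - μ 1 * D 0 + ∑ t ∈ Icc 1 (n - 1), (μ t - μ (t + 1)) * D t := by
  intro n hn
  induction n, hn using Nat.le_induction with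
  | base => simp; ring
  | succ n hn ih =>
    obtain ⟨m, rfl⟩ : ∃ m, n = m + 1 := ⟨n - 1, by omega⟩
    rw [Finset.sum_Icc_succ_top (by omega : 1 ≤ m + 1 + 1), ih]
    simp only [Nat.add_sub_cancel]
    rw [Finset.sum_Icc_succ_top (by omega : 1 ≤ m + 1)]
    ring

lemma key_nonneg (T : ℕ) (hT : 1 ≤ T) (μ D : ℕ → ℝ) (hD0 : D 0 = 0) (hDT : D T = 0)
    (hsign : ∀ t, 1 ≤ t → t ≤ T - 1 → 0 ≤ (μ t - μ (t + 1)) * D t) :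
    0 ≤ ∑ t ∈ Icc 1 T, μ t * (D t - D (t - 1)) := by
  rw [abel_sum μ D T hT, hD0, hDT]
  have : 0 ≤ ∑ t ∈ Icc 1 (T - 1), (μ t - μ (t + 1)) * D t :=
    Finset.sum_nonneg fun t ht => by
      rw [Finset.mem_Icc] at ht; exact hsign t ht.1 ht.2
  linarith

/-- Lagrangian sufficiency for two storage units: if `S* = (S₁*, S₂*)` is feasible, its increments
minimize the Lagrangian `C_t (x₁ + x₂) - μ₁* t • x₁ - μ₂* t • x₂` over the box at every time, and
the complementary slackness conditions hold, then `S*` minimizes the total cost among all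
feasible strategies. -/
theorem stmt_3 (T : ℕ) (hT : 1 ≤ T) (E₁ E₂ P₁ P₂ A₁ B₁ A₂ B₂ : ℝ)
    (hE₁ : 0 < E₁) (hE₂ : 0 < E₂) (hP₁ : 0 < P₁) (hP₂ : 0 < P₂)
    (C : ℕ → ℝ → ℝ) (S₁' S₂' : ℕ → ℝ) (μ₁ μ₂ : ℕ → ℝ)
    (hfeas : TwoUnitFeasible T E₁ E₂ P₁ P₂ A₁ B₁ A₂ B₂ S₁' S₂')
    (hmin : ∀ t, 1 ≤ t → t ≤ T →
      ∀ x₁ ∈ Set.Icc (-P₁) P₁, ∀ x₂ ∈ Set.Icc (-P₂) P₂,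
        C t ((S₁' t - S₁' (t - 1)) + (S₂' t - S₂' (t - 1)))
            - μ₁ t * (S₁' t - S₁' (t - 1)) - μ₂ t * (S₂' t - S₂' (t - 1))
          ≤ C t (x₁ + x₂) - μ₁ t * x₁ - μ₂ t * x₂)
    (hslack₁ : ∀ t, 1 ≤ t → t ≤ T - 1 →
      (0 < S₁' t → S₁' t < E₁ → μ₁ (t + 1) = μ₁ t) ∧
      (S₁' t = 0 → μ₁ (t + 1) ≤ μ₁ t) ∧
      (S₁' t = E₁ → μ₁ t ≤ μ₁ (t + 1)))
    (hslack₂ : ∀ t, 1 ≤ t → t ≤ T - 1 →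
      (0 < S₂' t → S₂' t < E₂ → μ₂ (t + 1) = μ₂ t) ∧
      (S₂' t = 0 → μ₂ (t + 1) ≤ μ₂ t) ∧
      (S₂' t = E₂ → μ₂ t ≤ μ₂ (t + 1))) :
    ∀ S₁ S₂ : ℕ → ℝ, TwoUnitFeasible T E₁ E₂ P₁ P₂ A₁ B₁ A₂ B₂ S₁ S₂ →
      TwoUnitCost T C S₁' S₂' ≤ TwoUnitCost T C S₁ S₂ := by
  intro S₁ S₂ hS
  obtain ⟨hA₁', hB₁', hA₂', hB₂', hcap', hrate'⟩ := hfeas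
  obtain ⟨hA₁, hB₁, hA₂, hB₂, hcap, hrate⟩ := hS
  -- Lagrangian inequality summed
  have hL : ∑ t ∈ Icc 1 T,
      (C t ((S₁' t - S₁' (t - 1)) + (S₂' t - S₂' (t - 1)))
        - μ₁ t * (S₁' t - S₁' (t - 1)) - μ₂ t * (S₂' t - S₂' (t - 1)))
      ≤ ∑ t ∈ Icc 1 T,
      (C t ((S₁ t - S₁ (t - 1)) + (S₂ t - S₂ (t - 1)))
        - μ₁ t * (S₁ t - S₁ (t - 1)) - μ₂ t * (S₂ t - S₂ (t - 1))) := by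
    apply Finset.sum_le_sum
    intro t ht
    rw [Finset.mem_Icc] at ht
    have h1 := (hrate t ht.1 ht.2).1
    have h2 := (hrate t ht.1 ht.2).2
    exact hmin t ht.1 ht.2 _ (abs_le.mp h1) _ (abs_le.mp h2)
  -- sign terms for each unit
  have hkey₁ : 0 ≤ ∑ t ∈ Icc 1 T, μ₁ t * ((fun s => S₁ s - S₁' s) t - (fun s => S₁ s - S₁' s) (t - 1)) := by
    apply key_nonneg T hT μ₁ _ (by simp [hA₁, hA₁']) (by simp [hB₁, hB₁'])
    intro t ht1 ht2
    have hs := hslack₁ t ht1 ht2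
    have hc := hcap t ht1 ht2
    have hc' := hcap' t ht1 ht2
    rcases eq_or_lt_of_le hc'.1 with h0 | h0
    · have := hs.2.1 h0.symm
      have : 0 ≤ μ₁ t - μ₁ (t + 1) := by linarith
      have : 0 ≤ S₁ t - S₁' t := by rw [← h0]; linarith [hc.1]
      nlinarith
    · rcases eq_or_lt_of_le hc'.2.1 with hE | hE
      · have := hs.2.2 hE
        have h1 : μ₁ t - μ₁ (t + 1) ≤ 0 := by linarith
        have h2 : S₁ t - S₁' t ≤ 0 := by rw [hE]; linarith [hc.2.1]
        nlinarith
      · rw [hs.1 h0 hE]; simp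
  have hkey₂ : 0 ≤ ∑ t ∈ Icc 1 T, μ₂ t * ((fun s => S₂ s - S₂' s) t - (fun s => S₂ s - S₂' s) (t - 1)) := by
    apply key_nonneg T hT μ₂ _ (by simp [hA₂, hA₂']) (by simp [hB₂, hB₂'])
    intro t ht1 ht2
    have hs := hslack₂ t ht1 ht2
    have hc := hcap t ht1 ht2
    have hc' := hcap' t ht1 ht2
    rcases eq_or_lt_of_le hc'.2.2.1 with h0 | h0
    · have := hs.2.1 h0.symm
      have : 0 ≤ μ₂ t - μ₂ (t + 1) := by linarith
      have : 0 ≤ S₂ t - S₂' t := by rw [← h0]; linarith [hc.2.2.1]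
      nlinarith
    · rcases eq_or_lt_of_le hc'.2.2.2 with hE | hE
      · have := hs.2.2 hE
        have h1 : μ₂ t - μ₂ (t + 1) ≤ 0 := by linarith
        have h2 : S₂ t - S₂' t ≤ 0 := by rw [hE]; linarith [hc.2.2.2]
        nlinarith
      · rw [hs.1 h0 hE]; simp
  -- combine
  unfold TwoUnitCost
  have hcomb : TwoUnitCost T C S₁ S₂ - TwoUnitCost T C S₁' S₂' =
      (∑ t ∈ Icc 1 T,
        (C t ((S₁ t - S₁ (t - 1)) + (S₂ t - S₂ (t - 1)))
          - μ₁ t * (S₁ t - S₁ (t - 1)) - μ₂ t * (S₂ t - S₂ (t - 1)))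
      - ∑ t ∈ Icc 1 T,
        (C t ((S₁' t - S₁' (t - 1)) + (S₂' t - S₂' (t - 1)))
          - μ₁ t * (S₁' t - S₁' (t - 1)) - μ₂ t * (S₂' t - S₂' (t - 1))))
      + (∑ t ∈ Icc 1 T, μ₁ t * ((fun s => S₁ s - S₁' s) t - (fun s => S₁ s - S₁' s) (t - 1)))
      + (∑ t ∈ Icc 1 T, μ₂ t * ((fun s => S₂ s - S₂' s) t - (fun s => S₂ s - S₂' s) (t - 1))) := by
    unfold TwoUnitCost
    rw [← Finset.sum_sub_distrib, ← Finset.sum_sub_distrib, ← Finset.sum_add_distrib,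
      ← Finset.sum_add_distrib]
    apply Finset.sum_congr rfl
    intro t _
    simp only
    ring
  have : 0 ≤ TwoUnitCost T C S₁ S₂ - TwoUnitCost T C S₁' S₂' := by
    rw [hcomb]; linarith
  unfold TwoUnitCost at this
  linarith
end

section
/- Reduction for proportional units: Suppose E₁/P₁ = E₂/P₂, and set λ = E₁/(E₁+E₂), E = E₁+E₂, P = P₁+P₂. If R ∈ ℝ^{T+1} is a feasible strategy for the single-unit problem with capacity E, power rate P, initial level S̄_{1,0} + S̄_{2,0} (= appropriate boundary data), then, provided λR₀ = S̄_{1,0}, λR_T = S̄_{1,T}, (1-λ)R₀ = S̄_{2,0}, (1-λ)R_T = S̄_{2,T}, the pair S = (λR, (1-λ)R) is a feasible strategy for the two-unit problem, and the cost of S in the two-unit problem equals the cost of R in the single-unit problem. -/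
open Finset

/-- Single-unit feasibility: boundary levels `A` and `B`, capacity `E`, power rate `P`. -/
def UnitFeasible (T : ℕ) (E P A B : ℝ) (S : ℕ → ℝ) : Prop :=
  S 0 = A ∧ S T = B ∧
  (∀ t, 1 ≤ t → t ≤ T - 1 → 0 ≤ S t ∧ S t ≤ E) ∧
  (∀ t, 1 ≤ t → t ≤ T → |S t - S (t - 1)| ≤ P)

/-- Reduction for proportional units: if `E₁/P₁ = E₂/P₂` and `R` is feasible for the aggregated
single unit `(E₁+E₂, P₁+P₂)`, then the proportional split `(λ R, (1-λ) R)` with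
`λ = E₁/(E₁+E₂)` is feasible for the two-unit problem (given compatible boundary data) and has
the same cost. -/
theorem stmt_7 (T : ℕ) (hT : 1 ≤ T) (E₁ E₂ P₁ P₂ A₁ B₁ A₂ B₂ : ℝ)
    (hE₁ : 0 < E₁) (hE₂ : 0 < E₂) (hP₁ : 0 < P₁) (hP₂ : 0 < P₂)
    (hprop : E₁ / P₁ = E₂ / P₂)
    (C : ℕ → ℝ → ℝ) (R : ℕ → ℝ)
    (hfeas : UnitFeasible T (E₁ + E₂) (P₁ + P₂) (A₁ + A₂) (B₁ + B₂) R)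
    (hb10 : E₁ / (E₁ + E₂) * R 0 = A₁) (hb1T : E₁ / (E₁ + E₂) * R T = B₁)
    (hb20 : (1 - E₁ / (E₁ + E₂)) * R 0 = A₂) (hb2T : (1 - E₁ / (E₁ + E₂)) * R T = B₂) :
    (UnitFeasible T E₁ P₁ A₁ B₁ (fun t => E₁ / (E₁ + E₂) * R t) ∧
      UnitFeasible T E₂ P₂ A₂ B₂ (fun t => (1 - E₁ / (E₁ + E₂)) * R t)) ∧
    ∑ t ∈ Finset.Icc 1 T,
        C t ((E₁ / (E₁ + E₂) * R t - E₁ / (E₁ + E₂) * R (t - 1))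
          + ((1 - E₁ / (E₁ + E₂)) * R t - (1 - E₁ / (E₁ + E₂)) * R (t - 1)))
      = ∑ t ∈ Finset.Icc 1 T, C t (R t - R (t - 1)) := by
  obtain ⟨h0, hTb, hcap, hrate⟩ := hfeas
  have hEsum : 0 < E₁ + E₂ := by linarith
  set l : ℝ := E₁ / (E₁ + E₂) with hl
  have hl0 : 0 < l := div_pos hE₁ hEsum
  have hl1 : l < 1 := (div_lt_one hEsum).2 (by linarith)
  have hlE : l * (E₁ + E₂) = E₁ := div_mul_cancel₀ _ hEsum.ne'
  -- proportionality: E₁ * P₂ = E₂ * P₁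
  have hx : E₁ * P₂ = E₂ * P₁ := by
    field_simp at hprop
    linarith [hprop]
  have hlP : l * (P₁ + P₂) = P₁ := by
    rw [hl, div_mul_eq_mul_div, div_eq_iff hEsum.ne']
    ring_nf
    nlinarith [hx]
  have hl'E : (1 - l) * (E₁ + E₂) = E₂ := by nlinarith [hlE]
  have hl'P : (1 - l) * (P₁ + P₂) = P₂ := by nlinarith [hlP]
  refine ⟨⟨⟨hb10, hb1T, ?_, ?_⟩, ⟨hb20, hb2T, ?_, ?_⟩⟩, ?_⟩
  · intro t h1 h2
    obtain ⟨ha, hb⟩ := hcap t h1 h2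
    constructor
    · positivity
    · calc l * R t ≤ l * (E₁ + E₂) := by nlinarith
        _ = E₁ := hlE
  · intro t h1 h2
    have := hrate t h1 h2
    rw [← mul_sub, abs_mul, abs_of_pos hl0]
    calc l * |R t - R (t-1)| ≤ l * (P₁ + P₂) := by nlinarith [abs_nonneg (R t - R (t-1))]
      _ = P₁ := hlP
  · intro t h1 h2
    obtain ⟨ha, hb⟩ := hcap t h1 h2
    have h1l : 0 < 1 - l := by linarith
    constructor
    · positivity
    · calc (1-l) * R t ≤ (1-l) * (E₁ + E₂) := by nlinarith
        _ = E₂ := hl'E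
  · intro t h1 h2
    have := hrate t h1 h2
    have h1l : 0 < 1 - l := by linarith
    rw [← mul_sub, abs_mul, abs_of_pos h1l]
    calc (1-l) * |R t - R (t-1)| ≤ (1-l) * (P₁ + P₂) := by
          nlinarith [abs_nonneg (R t - R (t-1))]
      _ = P₂ := hl'P
  · apply Finset.sum_congr rfl
    intro t _
    congr 1
    ring
end

section
/- For proportional units (E₁/P₁ = E₂/P₂), the optimal value of the two-unit problem equals the optimal value of the single-unit problem with E = E₁+E₂ and P = P₁+P₂ (with boundary levels summed): any feasible two-unit strategy (S₁, S₂) yields the feasible single-unit strategy S₁ + S₂ of equal cost, and conversely any feasible single-unit strategy R yields the feasible two-unit strategy (λR, (1-λ)R) of equal cost, where λ = E₁/(E₁+E₂). -/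
open Finset

/-- For proportional units (`E₁/P₁ = E₂/P₂`) with compatible boundary data, the set of cost
values achievable by feasible two-unit strategies equals the set of cost values achievable by
feasible strategies of the aggregated single unit `(E₁+E₂, P₁+P₂)`; in particular the two
problems have the same optimal value. -/
theorem stmt_8 (T : ℕ) (hT : 1 ≤ T) (E₁ E₂ P₁ P₂ A₁ B₁ A₂ B₂ : ℝ)
    (hE₁ : 0 < E₁) (hE₂ : 0 < E₂) (hP₁ : 0 < P₁) (hP₂ : 0 < P₂)
    (hprop : E₁ / P₁ = E₂ / P₂)
    (hbA₁ : A₁ = E₁ / (E₁ + E₂) * (A₁ + A₂)) (hbB₁ : B₁ = E₁ / (E₁ + E₂) * (B₁ + B₂))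
    (hbA₂ : A₂ = (1 - E₁ / (E₁ + E₂)) * (A₁ + A₂)) (hbB₂ : B₂ = (1 - E₁ / (E₁ + E₂)) * (B₁ + B₂))
    (C : ℕ → ℝ → ℝ) :
    {v : ℝ | ∃ S₁ S₂ : ℕ → ℝ,
        UnitFeasible T E₁ P₁ A₁ B₁ S₁ ∧ UnitFeasible T E₂ P₂ A₂ B₂ S₂ ∧
        v = ∑ t ∈ Finset.Icc 1 T, C t ((S₁ t - S₁ (t - 1)) + (S₂ t - S₂ (t - 1)))}
      = {v : ℝ | ∃ R : ℕ → ℝ,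
          UnitFeasible T (E₁ + E₂) (P₁ + P₂) (A₁ + A₂) (B₁ + B₂) R ∧
          v = ∑ t ∈ Finset.Icc 1 T, C t (R t - R (t - 1))} := by
  have hE : (0:ℝ) < E₁ + E₂ := by linarith
  have hP : (0:ℝ) < P₁ + P₂ := by linarith
  set l := E₁ / (E₁ + E₂) with hl
  clear_value l
  have hl0 : 0 < l := hl ▸ div_pos hE₁ hE
  have hl1 : l < 1 := by rw [hl]; exact (div_lt_one hE).mpr (by linarith)
  have hlE : l * (E₁ + E₂) = E₁ := by rw [hl]; exact div_mul_cancel₀ _ hE.ne'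
  have hlE2 : (1 - l) * (E₁ + E₂) = E₂ := by nlinarith [hlE]
  have hEP : E₁ * P₂ = E₂ * P₁ := by
    field_simp at hprop; linarith
  have hlP : l * (P₁ + P₂) = P₁ := by
    rw [hl, div_mul_eq_mul_div, div_eq_iff hE.ne']; nlinarith
  have hlP2 : (1 - l) * (P₁ + P₂) = P₂ := by nlinarith [hlP]
  ext v
  simp only [Set.mem_setOf_eq]
  constructor
  · rintro ⟨S₁, S₂, ⟨h10, h1T, h1b, h1r⟩, ⟨h20, h2T, h2b, h2r⟩, hv⟩
    refine ⟨fun t => S₁ t + S₂ t, ⟨by simp [h10, h20], by simp [h1T, h2T], ?_, ?_⟩, ?_⟩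
    · intro t ht1 ht2
      dsimp only
      obtain ⟨a1, a2⟩ := h1b t ht1 ht2; obtain ⟨b1, b2⟩ := h2b t ht1 ht2
      constructor <;> linarith
    · intro t ht1 ht2
      dsimp only
      have r1 := h1r t ht1 ht2; have r2 := h2r t ht1 ht2
      have : S₁ t + S₂ t - (S₁ (t-1) + S₂ (t-1))
          = (S₁ t - S₁ (t-1)) + (S₂ t - S₂ (t-1)) := by ring
      rw [this]
      calc |(S₁ t - S₁ (t-1)) + (S₂ t - S₂ (t-1))|
          ≤ |S₁ t - S₁ (t-1)| + |S₂ t - S₂ (t-1)| := abs_add_le _ _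
        _ ≤ P₁ + P₂ := by linarith
    · rw [hv]
      refine Finset.sum_congr rfl fun t _ => ?_
      congr 1; ring
  · rintro ⟨R, ⟨h0, hTT, hb, hr⟩, hv⟩
    refine ⟨fun t => l * R t, fun t => (1 - l) * R t,
      ⟨by show l * R 0 = A₁; rw [h0]; exact hbA₁.symm,
       by show l * R T = B₁; rw [hTT]; exact hbB₁.symm, ?_, ?_⟩,
      ⟨by show (1 - l) * R 0 = A₂; rw [h0]; exact hbA₂.symm,
       by show (1 - l) * R T = B₂; rw [hTT]; exact hbB₂.symm, ?_, ?_⟩, ?_⟩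
    · intro t ht1 ht2
      dsimp only
      obtain ⟨a1, a2⟩ := hb t ht1 ht2
      constructor
      · positivity
      · calc l * R t ≤ l * (E₁ + E₂) := by nlinarith
          _ = E₁ := hlE
    · intro t ht1 ht2
      dsimp only
      have r := hr t ht1 ht2
      have : l * R t - l * R (t-1) = l * (R t - R (t-1)) := by ring
      rw [this, abs_mul, abs_of_pos hl0, ← hlP]
      exact mul_le_mul_of_nonneg_left r hl0.le
    · intro t ht1 ht2
      dsimp only
      obtain ⟨a1, a2⟩ := hb t ht1 ht2
      have h1l : 0 < 1 - l := by linarith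
      constructor
      · positivity
      · calc (1 - l) * R t ≤ (1 - l) * (E₁ + E₂) := by nlinarith
          _ = E₂ := hlE2
    · intro t ht1 ht2
      dsimp only
      have r := hr t ht1 ht2
      have h1l : 0 < 1 - l := by linarith
      have : (1 - l) * R t - (1 - l) * R (t-1) = (1 - l) * (R t - R (t-1)) := by ring
      rw [this, abs_mul, abs_of_pos h1l, ← hlP2]
      exact mul_le_mul_of_nonneg_left r h1l.le
    · rw [hv]
      refine Finset.sum_congr rfl fun t _ => ?_
      dsimp only
      congr 1; ring
end

section
/- Strong duality direction of the sufficiency theorem restated for a single unit: If S* ∈ ℝ^{T+1} is feasible for the single-unit problem (S*_0 = S̄_0, S*_T = S̄_T, 0 ≤ S*_t ≤ E, |S*_t - S*_{t-1}| ≤ P), and μ* ∈ ℝ^T is such that for each t the increment x_t(S*) = S*_t - S*_{t-1} minimizes C_t(x) - μ*_t x over [-P, P], and the complementary slackness conditions hold (μ*_{t+1} = μ*_t if 0 < S*_t < E; μ*_{t+1} ≤ μ*_t if S*_t = 0; μ*_{t+1} ≥ μ*_t if S*_t = E, for 1 ≤ t ≤ T-1), then S* minimizes ∑_{t=1}^T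 C_t(S_t - S_{t-1}) over all feasible strategies S. -/
open Finset

lemma abel_aux (μ D : ℕ → ℝ) : ∀ m : ℕ,
    ∑ t ∈ Finset.Icc 1 (m + 1), μ t * (D t - D (t - 1)) =
      μ (m + 1) * D (m + 1) - μ 1 * D 0 +
        ∑ t ∈ Finset.Icc 1 m, (μ t - μ (t + 1)) * D t := by
  intro m
  induction m with
  | zero => simp; ring
  | succ n ih =>
    rw [Finset.sum_Icc_succ_top (by omega : 1 ≤ n + 1 + 1), ih,
        Finset.sum_Icc_succ_top (by omega : 1 ≤ n + 1)]
    simp only [Nat.add_sub_cancel]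
    ring

/-- Lagrangian sufficiency for a single storage unit: if `S*` is feasible, each increment
minimizes `C_t x - μ*_t x` over `[-P, P]`, and the complementary slackness conditions hold,
then `S*` minimizes the total cost among all feasible strategies. -/
theorem stmt_17 (T : ℕ) (hT : 1 ≤ T) (E P A B : ℝ) (hE : 0 < E) (hP : 0 < P)
    (C : ℕ → ℝ → ℝ) (S' : ℕ → ℝ) (μ : ℕ → ℝ)
    (hfeas : UnitFeasible T E P A B S')
    (hmin : ∀ t, 1 ≤ t → t ≤ T → ∀ x ∈ Set.Icc (-P) P,
      C t (S' t - S' (t - 1)) - μ t * (S' t - S' (t - 1)) ≤ C t x - μ t * x)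
    (hslack : ∀ t, 1 ≤ t → t ≤ T - 1 →
      (0 < S' t → S' t < E → μ (t + 1) = μ t) ∧
      (S' t = 0 → μ (t + 1) ≤ μ t) ∧
      (S' t = E → μ t ≤ μ (t + 1))) :
    ∀ S : ℕ → ℝ, UnitFeasible T E P A B S →
      ∑ t ∈ Finset.Icc 1 T, C t (S' t - S' (t - 1))
        ≤ ∑ t ∈ Finset.Icc 1 T, C t (S t - S (t - 1)) := by
  intro S hS
  obtain ⟨h0', hT', hbd', habs'⟩ := hfeas
  obtain ⟨h0, hTs, hbd, habs⟩ := hS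
  set D : ℕ → ℝ := fun t => S' t - S t with hD
  -- Lagrangian inequality
  have key : ∑ t ∈ Finset.Icc 1 T, (C t (S' t - S' (t - 1)) - μ t * (S' t - S' (t - 1)))
      ≤ ∑ t ∈ Finset.Icc 1 T, (C t (S t - S (t - 1)) - μ t * (S t - S (t - 1))) := by
    apply Finset.sum_le_sum
    intro t ht
    rw [Finset.mem_Icc] at ht
    exact hmin t ht.1 ht.2 _ (Set.mem_Icc.2 (abs_le.1 (habs t ht.1 ht.2)))
  -- the dual sum
  obtain ⟨m, rfl⟩ : ∃ m, T = m + 1 := ⟨T - 1, by omega⟩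
  have hsum : ∑ t ∈ Finset.Icc 1 (m + 1), μ t * (D t - D (t - 1))
      = ∑ t ∈ Finset.Icc 1 m, (μ t - μ (t + 1)) * D t := by
    have := abel_aux μ D m
    have hDT : D (m + 1) = 0 := by simp [hD, hT', hTs]
    have hD0 : D 0 = 0 := by simp [hD, h0, h0']
    rw [this, hDT, hD0]; ring
  have hnonpos : ∑ t ∈ Finset.Icc 1 m, (μ t - μ (t + 1)) * D t ≤ 0 := by
    apply Finset.sum_nonpos
    intro t ht
    rw [Finset.mem_Icc] at ht
    have htle : t ≤ m + 1 - 1 := by omega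
    have hb' := hbd' t ht.1 htle
    have hb := hbd t ht.1 htle
    have hs := hslack t ht.1 htle
    rcases eq_or_lt_of_le hb'.1 with h1 | h1
    · -- S' t = 0
      have hμ := hs.2.1 h1.symm
      have : D t ≤ 0 := by simp [hD, ← h1]; exact hb.1
      nlinarith
    rcases eq_or_lt_of_le hb'.2 with h2 | h2
    · -- S' t = E
      have hμ := hs.2.2 h2
      have : 0 ≤ D t := by simp [hD, h2]; exact hb.2
      nlinarith
    · rw [hs.1 h1 h2]; ring_nf; simp
  -- combine
  have expand : ∀ t, μ t * (S' t - S' (t-1)) - μ t * (S t - S (t-1))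
      = μ t * (D t - D (t - 1)) := by
    intro t; simp [hD]; ring
  calc ∑ t ∈ Finset.Icc 1 (m+1), C t (S' t - S' (t - 1))
      = ∑ t ∈ Finset.Icc 1 (m+1), (C t (S' t - S' (t - 1)) - μ t * (S' t - S' (t - 1)))
        + ∑ t ∈ Finset.Icc 1 (m+1), μ t * (S' t - S' (t - 1)) := by
        rw [← Finset.sum_add_distrib]; congr 1; ext t; ring
    _ ≤ ∑ t ∈ Finset.Icc 1 (m+1), (C t (S t - S (t - 1)) - μ t * (S t - S (t - 1)))
        + ∑ t ∈ Finset.Icc 1 (m+1), μ t * (S' t - S' (t - 1)) := by linarith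
    _ = ∑ t ∈ Finset.Icc 1 (m+1), C t (S t - S (t - 1))
        + ∑ t ∈ Finset.Icc 1 (m+1), μ t * (D t - D (t-1)) := by
        rw [← Finset.sum_add_distrib, ← Finset.sum_add_distrib]
        apply Finset.sum_congr rfl
        intro t _
        have := expand t
        simp [hD] at this ⊢
        linarith
    _ ≤ ∑ t ∈ Finset.Icc 1 (m+1), C t (S t - S (t - 1)) := by
        rw [hsum]; linarith
end
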